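/- arXiv:1001.1466 — 2 statements merged into one kernel-verified Lean document; each statement's English description precedes it below -/
import Mathlib

section
/- Let K be a field, let r ∈ K be a primitive n-th root of unity with n > 1, let α = 2r, β = −r², γ ∈ K, and let A = A(α, β, γ). Set w = du − r·ud + γ/(r−1) ∈ A. Then w is a normal element of A (i.e., Aw = wA, so Aw is a two-sided ideal), and the quotient Ā = A/Aw is generated by the images d̄, ū of d, u subject to the single relation d̄ū − r·ūd̄ + γ/(r−1) = 0; consequently Ā is isomorphic as a K-algebra to the quantized Weyl algebra C(r) if γ ≠ 0, and to the coordinate algebra of the quantum plane B(r) if γ = 0. -/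
noncomputable section

open FreeAlgebra

/-- Defining relations of the down-up algebra `A(α, β, γ)`: the generator `ι K 0`
plays the role of `d` and `ι K 1` plays the role of `u`. -/
inductive DownUpRel (K : Type) [Field K] (α β γ : K) :
    FreeAlgebra K (Fin 2) → FreeAlgebra K (Fin 2) → Prop
  | rel1 : DownUpRel K α β γ
      (ι K (0 : Fin 2) * ι K (0 : Fin 2) * ι K (1 : Fin 2))
      (α • (ι K (0 : Fin 2) * ι K (1 : Fin 2) * ι K (0 : Fin 2)) +
        β • (ι K (1 : Fin 2) * ι K (0 : Fin 2) * ι K (0 : Fin 2)) +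
        γ • ι K (0 : Fin 2))
  | rel2 : DownUpRel K α β γ
      (ι K (0 : Fin 2) * ι K (1 : Fin 2) * ι K (1 : Fin 2))
      (α • (ι K (1 : Fin 2) * ι K (0 : Fin 2) * ι K (1 : Fin 2)) +
        β • (ι K (1 : Fin 2) * ι K (1 : Fin 2) * ι K (0 : Fin 2)) +
        γ • ι K (1 : Fin 2))

/-- The down-up algebra `A(α, β, γ)`. -/
abbrev DownUpAlgebra (K : Type) [Field K] (α β γ : K) : Type :=
  RingQuot (DownUpRel K α β γ)

/-- The generator `d` of the down-up algebra. -/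
def DownUpAlgebra.d (K : Type) [Field K] (α β γ : K) : DownUpAlgebra K α β γ :=
  RingQuot.mkAlgHom K (DownUpRel K α β γ) (ι K (0 : Fin 2))

/-- The generator `u` of the down-up algebra. -/
def DownUpAlgebra.u (K : Type) [Field K] (α β γ : K) : DownUpAlgebra K α β γ :=
  RingQuot.mkAlgHom K (DownUpRel K α β γ) (ι K (1 : Fin 2))

/-- Defining relation of the quantum plane `B(q)`: `a * b = q • (b * a)`, where
`ι K 0` plays the role of `a` and `ι K 1` plays the role of `b`. -/
inductive QuantumPlaneRel (K : Type) [Field K] (q : K) :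
    FreeAlgebra K (Fin 2) → FreeAlgebra K (Fin 2) → Prop
  | rel : QuantumPlaneRel K q (ι K (0 : Fin 2) * ι K (1 : Fin 2))
      (q • (ι K (1 : Fin 2) * ι K (0 : Fin 2)))

/-- The coordinate algebra of the quantum plane `B(q)`. -/
abbrev QuantumPlane (K : Type) [Field K] (q : K) : Type :=
  RingQuot (QuantumPlaneRel K q)

/-- The generator `a` of the quantum plane. -/
def QuantumPlane.a (K : Type) [Field K] (q : K) : QuantumPlane K q :=
  RingQuot.mkAlgHom K (QuantumPlaneRel K q) (ι K (0 : Fin 2))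

/-- The generator `b` of the quantum plane. -/
def QuantumPlane.b (K : Type) [Field K] (q : K) : QuantumPlane K q :=
  RingQuot.mkAlgHom K (QuantumPlaneRel K q) (ι K (1 : Fin 2))

/-- Defining relation of the quantized Weyl algebra `C(q)`: `a * b = q • (b * a) + 1`,
where `ι K 0` plays the role of `a` and `ι K 1` plays the role of `b`. -/
inductive QuantizedWeylRel (K : Type) [Field K] (q : K) :
    FreeAlgebra K (Fin 2) → FreeAlgebra K (Fin 2) → Prop
  | rel : QuantizedWeylRel K q (ι K (0 : Fin 2) * ι K (1 : Fin 2))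
      (q • (ι K (1 : Fin 2) * ι K (0 : Fin 2)) + 1)

/-- The quantized Weyl algebra `C(q)`. -/
abbrev QuantizedWeyl (K : Type) [Field K] (q : K) : Type :=
  RingQuot (QuantizedWeylRel K q)

/-- The generator `a` of the quantized Weyl algebra. -/
def QuantizedWeyl.a (K : Type) [Field K] (q : K) : QuantizedWeyl K q :=
  RingQuot.mkAlgHom K (QuantizedWeylRel K q) (ι K (0 : Fin 2))

/-- The generator `b` of the quantized Weyl algebra. -/
def QuantizedWeyl.b (K : Type) [Field K] (q : K) : QuantizedWeyl K q :=
  RingQuot.mkAlgHom K (QuantizedWeylRel K q) (ι K (1 : Fin 2))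

/-- The relation identifying a single element `w` with `0`; `RingQuot` of this relation
is the quotient of the ring by the two-sided ideal generated by `w`. -/
def SingleRel (A : Type) [Ring A] (w : A) : A → A → Prop := fun x y => x = w ∧ y = 0

/-!
With `α = 2r` and `β = -r²` the two defining relations of `A` factor through the shifted
`r`-commutator `w = du - r·ud + c`, `c = γ/(r-1)`: they say exactly that `d·w = r·(w·d)` and
`w·u = r·(u·w)`, because `d(du - r·ud) - r(du - r·ud)d = d²u - 2r·dud + r²·ud²` and
`γ = (r-1)c`. As `r ≠ 0` and `d`, `u` generate `A`, this skew-commutation gives `Aw = wA`.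
Conversely any pair `x, y` with `xy - r·yx + c = 0` satisfies the down-up relations, so `A/(w)`
is presented by that single relation. For `c = 0` this is the quantum plane `B(r)`; for `c ≠ 0`
the generator `-c⁻¹·d̄` turns it into `ab - r·ba = 1`, the quantized Weyl algebra `C(r)`.
-/

section Normal

variable {K A : Type*} [CommSemiring K] [Semiring A] [Algebra K A]

theorem exists_mul_eq_mul_of_mem_adjoin {s : Set A} {w : A}
    (hs : ∀ g ∈ s, ∃ y, g * w = w * y) {x : A} (hx : x ∈ Algebra.adjoin K s) :
    ∃ y, x * w = w * y := by
  induction hx using Algebra.adjoin_induction with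
  | mem g hg => exact hs g hg
  | algebraMap k => exact ⟨algebraMap K A k, Algebra.commutes k w⟩
  | add x x' _ _ hx hx' =>
    obtain ⟨y, hy⟩ := hx
    obtain ⟨y', hy'⟩ := hx'
    exact ⟨y + y', by rw [add_mul, hy, hy', mul_add]⟩
  | mul x x' _ _ hx hx' =>
    obtain ⟨y, hy⟩ := hx
    obtain ⟨y', hy'⟩ := hx'
    exact ⟨y * y', by rw [mul_assoc, hy', ← mul_assoc, hy, mul_assoc]⟩

theorem exists_mul_eq_mul_of_mem_adjoin' {s : Set A} {w : A}
    (hs : ∀ g ∈ s, ∃ y, w * g = y * w) {x : A} (hx : x ∈ Algebra.adjoin K s) :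
    ∃ y, w * x = y * w := by
  induction hx using Algebra.adjoin_induction with
  | mem g hg => exact hs g hg
  | algebraMap k => exact ⟨algebraMap K A k, (Algebra.commutes k w).symm⟩
  | add x x' _ _ hx hx' =>
    obtain ⟨y, hy⟩ := hx
    obtain ⟨y', hy'⟩ := hx'
    exact ⟨y + y', by rw [mul_add, hy, hy', add_mul]⟩
  | mul x x' _ _ hx hx' =>
    obtain ⟨y, hy⟩ := hx
    obtain ⟨y', hy'⟩ := hx'
    exact ⟨y * y', by rw [← mul_assoc, hy, mul_assoc, hy', mul_assoc]⟩

theorem range_mul_const_eq_range_const_mul_of_adjoin_eq_top {s : Set A}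
    (hs : Algebra.adjoin K s = ⊤) {w : A} (hl : ∀ g ∈ s, ∃ y, g * w = w * y)
    (hr : ∀ g ∈ s, ∃ y, w * g = y * w) :
    Set.range (fun x => x * w) = Set.range (fun x => w * x) := by
  have hmem (x : A) : x ∈ Algebra.adjoin K s := hs ▸ Algebra.mem_top
  ext z
  constructor
  · rintro ⟨x, rfl⟩
    obtain ⟨y, hy⟩ := exists_mul_eq_mul_of_mem_adjoin hl (hmem x)
    exact ⟨y, hy.symm⟩
  · rintro ⟨x, rfl⟩
    obtain ⟨y, hy⟩ := exists_mul_eq_mul_of_mem_adjoin' hr (hmem x)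
    exact ⟨y, hy.symm⟩

end Normal

namespace RingQuot

variable {K B : Type*} [CommSemiring K] [Semiring B] [Algebra K B]
  {rel : FreeAlgebra K (Fin 2) → FreeAlgebra K (Fin 2) → Prop}

def liftPair (x y : B)
    (h : ∀ ⦃p q⦄, rel p q → FreeAlgebra.lift K ![x, y] p = FreeAlgebra.lift K ![x, y] q) :
    RingQuot rel →ₐ[K] B :=
  liftAlgHom K ⟨FreeAlgebra.lift K ![x, y], h⟩

variable {x y : B}
  {h : ∀ ⦃p q⦄, rel p q → FreeAlgebra.lift K ![x, y] p = FreeAlgebra.lift K ![x, y] q}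

@[simp]
theorem liftPair_mkAlgHom_ι_zero : liftPair x y h (mkAlgHom K rel (ι K 0)) = x := by
  simp [liftPair]

@[simp]
theorem liftPair_mkAlgHom_ι_one : liftPair x y h (mkAlgHom K rel (ι K 1)) = y := by
  simp [liftPair]

theorem algHom_ext_pair {f g : RingQuot rel →ₐ[K] B}
    (h0 : f (mkAlgHom K rel (ι K 0)) = g (mkAlgHom K rel (ι K 0)))
    (h1 : f (mkAlgHom K rel (ι K 1)) = g (mkAlgHom K rel (ι K 1))) : f = g :=
  ringQuot_ext' K f g <| FreeAlgebra.hom_ext <| funext <| Fin.forall_fin_two.2 ⟨h0, h1⟩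

theorem adjoin_mkAlgHom_ι_pair :
    Algebra.adjoin K {mkAlgHom K rel (ι K 0), mkAlgHom K rel (ι K 1)} = ⊤ := by
  have hgen : Set.range (ι K : Fin 2 → FreeAlgebra K (Fin 2)) = {ι K 0, ι K 1} := by
    ext
    simp [Fin.exists_fin_two, eq_comm]
  rw [← Set.image_pair, ← hgen, Algebra.adjoin_image, FreeAlgebra.adjoin_range_ι,
    Algebra.map_top, AlgHom.range_eq_top]
  exact mkAlgHom_surjective K rel

end RingQuot

def IsDownUpPair {K B : Type*} [CommSemiring K] [Semiring B] [Algebra K B] (α β γ : K)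
    (x y : B) : Prop :=
  x * x * y = α • (x * y * x) + β • (y * x * x) + γ • x ∧
    x * y * y = α • (y * x * y) + β • (y * y * x) + γ • y

section ShiftedQCommutator

variable {K B C : Type*} [CommRing K] [Ring B] [Algebra K B] [Ring C] [Algebra K C]

def shiftedQCommutator (r c : K) (x y : B) : B :=
  x * y - r • (y * x) + algebraMap K B c

@[simp]
theorem map_shiftedQCommutator (f : B →ₐ[K] C) (r c : K) (x y : B) :
    f (shiftedQCommutator r c x y) = shiftedQCommutator r c (f x) (f y) := by
  simp [shiftedQCommutator]

variable {r c : K} {x y : B}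

theorem isDownUpPair_of_shiftedQCommutator_eq_zero (h : shiftedQCommutator r c x y = 0) :
    IsDownUpPair (2 * r) (-(r ^ 2)) ((r - 1) * c) x y := by
  have hxy : x * y = r • (y * x) - c • 1 := by
    rw [shiftedQCommutator] at h
    rw [← Algebra.algebraMap_eq_smul_one]
    linear_combination (norm := module) h
  constructor
  · rw [mul_assoc, hxy]
    simp only [mul_sub, mul_smul_comm, ← mul_assoc, hxy, sub_mul, smul_mul_assoc, one_mul,
      mul_one]
    module
  · simp only [hxy, mul_sub, mul_smul_comm, mul_assoc, sub_mul, smul_mul_assoc, one_mul,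
      mul_one]
    module

theorem IsDownUpPair.mul_shiftedQCommutator
    (h : IsDownUpPair (2 * r) (-(r ^ 2)) ((r - 1) * c) x y) :
    x * shiftedQCommutator r c x y = r • (shiftedQCommutator r c x y * x) := by
  have h1 := h.1
  simp only [shiftedQCommutator, mul_add, add_mul, mul_sub, sub_mul, smul_mul_assoc,
    mul_smul_comm, ← mul_assoc, Algebra.algebraMap_eq_smul_one, one_mul, mul_one] at h1 ⊢
  linear_combination (norm := module) h1

theorem IsDownUpPair.shiftedQCommutator_mul
    (h : IsDownUpPair (2 * r) (-(r ^ 2)) ((r - 1) * c) x y) :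
    shiftedQCommutator r c x y * y = r • (y * shiftedQCommutator r c x y) := by
  have h2 := h.2
  simp only [shiftedQCommutator, mul_add, add_mul, mul_sub, sub_mul, smul_mul_assoc,
    mul_smul_comm, ← mul_assoc, Algebra.algebraMap_eq_smul_one, one_mul, mul_one] at h2 ⊢
  linear_combination (norm := module) h2

theorem shiftedQCommutator_eq_zero_iff_of_eq_zero (hc : c = 0) :
    shiftedQCommutator r c x y = 0 ↔ x * y = r • (y * x) := by
  rw [shiftedQCommutator, hc, map_zero, add_zero, sub_eq_zero]

theorem shiftedQCommutator_neg_smul_eq_zero (h : x * y = r • (y * x) + 1) :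
    shiftedQCommutator r c ((-c) • x) y = 0 := by
  rw [shiftedQCommutator, smul_mul_assoc, mul_smul_comm, h, Algebra.algebraMap_eq_smul_one]
  module

end ShiftedQCommutator

theorem inv_neg_smul_mul_eq_of_shiftedQCommutator_eq_zero {K B : Type*} [Field K] [Ring B]
    [Algebra K B] {r c : K} {x y : B} (hc : c ≠ 0) (h : shiftedQCommutator r c x y = 0) :
    (-c)⁻¹ • x * y = r • (y * ((-c)⁻¹ • x)) + 1 := by
  rw [shiftedQCommutator, Algebra.algebraMap_eq_smul_one] at h
  rw [smul_mul_assoc, mul_smul_comm]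
  linear_combination (norm := skip) (-c)⁻¹ • h
  match_scalars <;> field_simp <;> ring

namespace QuantizedWeyl

variable {K : Type} [Field K] {B : Type*} [Semiring B] [Algebra K B] {q : K}

theorem a_mul_b : a K q * b K q = q • (b K q * a K q) + 1 := by
  simpa only [a, b, map_add, map_mul, map_smul, map_one] using
    RingQuot.mkAlgHom_rel K (QuantizedWeylRel.rel (K := K) (q := q))

def lift {x y : B} (h : x * y = q • (y * x) + 1) : QuantizedWeyl K q →ₐ[K] B :=
  RingQuot.liftPair x y <| by
    rintro _ _ ⟨⟩
    simpa using h

@[simp]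
theorem lift_a {x y : B} (h : x * y = q • (y * x) + 1) : lift h (a K q) = x :=
  RingQuot.liftPair_mkAlgHom_ι_zero

@[simp]
theorem lift_b {x y : B} (h : x * y = q • (y * x) + 1) : lift h (b K q) = y :=
  RingQuot.liftPair_mkAlgHom_ι_one

theorem algHom_ext {f g : QuantizedWeyl K q →ₐ[K] B} (ha : f (a K q) = g (a K q))
    (hb : f (b K q) = g (b K q)) : f = g :=
  RingQuot.algHom_ext_pair ha hb

end QuantizedWeyl

namespace QuantumPlane

variable {K : Type} [Field K] {B : Type*} [Semiring B] [Algebra K B] {q : K}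

theorem a_mul_b : a K q * b K q = q • (b K q * a K q) := by
  simpa only [a, b, map_mul, map_smul] using
    RingQuot.mkAlgHom_rel K (QuantumPlaneRel.rel (K := K) (q := q))

def lift {x y : B} (h : x * y = q • (y * x)) : QuantumPlane K q →ₐ[K] B :=
  RingQuot.liftPair x y <| by
    rintro _ _ ⟨⟩
    simpa using h

@[simp]
theorem lift_a {x y : B} (h : x * y = q • (y * x)) : lift h (a K q) = x :=
  RingQuot.liftPair_mkAlgHom_ι_zero

@[simp]
theorem lift_b {x y : B} (h : x * y = q • (y * x)) : lift h (b K q) = y :=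
  RingQuot.liftPair_mkAlgHom_ι_one

theorem algHom_ext {f g : QuantumPlane K q →ₐ[K] B} (ha : f (a K q) = g (a K q))
    (hb : f (b K q) = g (b K q)) : f = g :=
  RingQuot.algHom_ext_pair ha hb

end QuantumPlane

namespace DownUpAlgebra

variable {K : Type} [Field K]

section Presentation

variable {B : Type*} [Semiring B] [Algebra K B] {α β γ : K}

theorem isDownUpPair_d_u : IsDownUpPair α β γ (d K α β γ) (u K α β γ) :=
  ⟨by simpa only [d, u, map_add, map_mul, map_smul] using
      RingQuot.mkAlgHom_rel K (DownUpRel.rel1 (K := K) (α := α) (β := β) (γ := γ)),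
    by simpa only [d, u, map_add, map_mul, map_smul] using
      RingQuot.mkAlgHom_rel K (DownUpRel.rel2 (K := K) (α := α) (β := β) (γ := γ))⟩

def lift {x y : B} (h : IsDownUpPair α β γ x y) : DownUpAlgebra K α β γ →ₐ[K] B :=
  RingQuot.liftPair x y <| by
    rintro _ _ (_ | _)
    · simpa using h.1
    · simpa using h.2

@[simp]
theorem lift_d {x y : B} (h : IsDownUpPair α β γ x y) : lift h (d K α β γ) = x :=
  RingQuot.liftPair_mkAlgHom_ι_zero

@[simp]
theorem lift_u {x y : B} (h : IsDownUpPair α β γ x y) : lift h (u K α β γ) = y :=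
  RingQuot.liftPair_mkAlgHom_ι_one

theorem algHom_ext {f g : DownUpAlgebra K α β γ →ₐ[K] B}
    (hd : f (d K α β γ) = g (d K α β γ)) (hu : f (u K α β γ) = g (u K α β γ)) : f = g :=
  RingQuot.algHom_ext_pair hd hu

theorem adjoin_d_u : Algebra.adjoin K {d K α β γ, u K α β γ} = ⊤ :=
  RingQuot.adjoin_mkAlgHom_ι_pair

end Presentation

section NormalElement

variable {r γ : K}

local notation "𝔸" => DownUpAlgebra K (2 * r) (-(r ^ 2)) γ
local notation "𝔡" => d K (2 * r) (-(r ^ 2)) γ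
local notation "𝔲" => u K (2 * r) (-(r ^ 2)) γ
local notation "𝔴" => shiftedQCommutator r (γ / (r - 1)) 𝔡 𝔲

theorem isDownUpPair_d_u_of_ne_one (hr : r ≠ 1) :
    IsDownUpPair (2 * r) (-(r ^ 2)) ((r - 1) * (γ / (r - 1))) 𝔡 𝔲 := by
  rw [mul_div_cancel₀ γ (sub_ne_zero.2 hr)]
  exact isDownUpPair_d_u

theorem range_mul_w_eq_range_w_mul (hr1 : r ≠ 1) (hr0 : r ≠ 0) :
    Set.range (fun x : 𝔸 => x * 𝔴) = Set.range (fun x : 𝔸 => 𝔴 * x) := by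
  have hd := (isDownUpPair_d_u_of_ne_one (γ := γ) hr1).mul_shiftedQCommutator
  have hu := (isDownUpPair_d_u_of_ne_one (γ := γ) hr1).shiftedQCommutator_mul
  refine range_mul_const_eq_range_const_mul_of_adjoin_eq_top adjoin_d_u ?_ ?_
  · rintro g (rfl | rfl)
    · exact ⟨r • 𝔡, by rw [hd, mul_smul_comm]⟩
    · exact ⟨r⁻¹ • 𝔲, by rw [mul_smul_comm, hu, inv_smul_smul₀ hr0]⟩
  · rintro g (rfl | rfl)
    · exact ⟨r⁻¹ • 𝔡, by rw [smul_mul_assoc, hd, inv_smul_smul₀ hr0]⟩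
    · exact ⟨r • 𝔲, by rw [hu, smul_mul_assoc]⟩

local notation "Ā" => RingQuot (SingleRel 𝔸 𝔴)
local notation "π" => RingQuot.mkAlgHom K (SingleRel 𝔸 𝔴)

theorem shiftedQCommutator_mk_d_mk_u :
    shiftedQCommutator r (γ / (r - 1)) (π 𝔡) (π 𝔲) = 0 := by
  rw [← map_shiftedQCommutator, RingQuot.mkAlgHom_rel K (s := SingleRel 𝔸 𝔴) ⟨rfl, rfl⟩,
    map_zero]

theorem adjoin_mk_d_mk_u : Algebra.adjoin K {π 𝔡, π 𝔲} = ⊤ := by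
  rw [← Set.image_pair, Algebra.adjoin_image, adjoin_d_u, Algebra.map_top, AlgHom.range_eq_top]
  exact RingQuot.mkAlgHom_surjective K _

variable {B : Type*} [Ring B] [Algebra K B]

def quotientLift (hr : r ≠ 1) {x y : B} (h : shiftedQCommutator r (γ / (r - 1)) x y = 0) :
    Ā →ₐ[K] B :=
  RingQuot.liftAlgHom K ⟨lift (mul_div_cancel₀ γ (sub_ne_zero.2 hr) ▸
      isDownUpPair_of_shiftedQCommutator_eq_zero h), by
    rintro _ _ ⟨rfl, rfl⟩
    simpa using h⟩

@[simp]
theorem quotientLift_mk_d (hr : r ≠ 1) {x y : B}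
    (h : shiftedQCommutator r (γ / (r - 1)) x y = 0) :
    quotientLift hr h (π 𝔡) = x := by
  simp [quotientLift]

@[simp]
theorem quotientLift_mk_u (hr : r ≠ 1) {x y : B}
    (h : shiftedQCommutator r (γ / (r - 1)) x y = 0) :
    quotientLift hr h (π 𝔲) = y := by
  simp [quotientLift]

theorem quotient_algHom_ext {B : Type*} [Semiring B] [Algebra K B] {f g : Ā →ₐ[K] B}
    (hd : f (π 𝔡) = g (π 𝔡)) (hu : f (π 𝔲) = g (π 𝔲)) : f = g :=
  RingQuot.ringQuot_ext' K f g (algHom_ext hd hu)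

def quotientEquivQuantizedWeyl (hr : r ≠ 1) (hγ : γ ≠ 0) : Ā ≃ₐ[K] QuantizedWeyl K r := by
  have hc : γ / (r - 1) ≠ 0 := div_ne_zero hγ (sub_ne_zero.2 hr)
  refine AlgEquiv.ofAlgHom
    (quotientLift hr (shiftedQCommutator_neg_smul_eq_zero QuantizedWeyl.a_mul_b))
    (QuantizedWeyl.lift
      (inv_neg_smul_mul_eq_of_shiftedQCommutator_eq_zero hc shiftedQCommutator_mk_d_mk_u))
    ?_ ?_
  · apply QuantizedWeyl.algHom_ext
    · simp only [AlgHom.comp_apply, QuantizedWeyl.lift_a, map_smul, quotientLift_mk_d,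
        inv_smul_smul₀ (neg_ne_zero.2 hc), AlgHom.id_apply]
    · simp
  · apply quotient_algHom_ext
    · simp only [AlgHom.comp_apply, quotientLift_mk_d, map_smul, QuantizedWeyl.lift_a,
        smul_inv_smul₀ (neg_ne_zero.2 hc), AlgHom.id_apply]
    · simp

def quotientEquivQuantumPlane (hr : r ≠ 1) (hγ : γ = 0) : Ā ≃ₐ[K] QuantumPlane K r := by
  have hc : γ / (r - 1) = 0 := by rw [hγ, zero_div]
  refine AlgEquiv.ofAlgHom
    (quotientLift hr ((shiftedQCommutator_eq_zero_iff_of_eq_zero hc).2 QuantumPlane.a_mul_b))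
    (QuantumPlane.lift
      ((shiftedQCommutator_eq_zero_iff_of_eq_zero hc).1 shiftedQCommutator_mk_d_mk_u))
    ?_ ?_
  · apply QuantumPlane.algHom_ext <;> simp
  · apply quotient_algHom_ext <;> simp

end NormalElement

end DownUpAlgebra

/-- Let `r` be a primitive `n`-th root of unity with `n > 1`, `A = A(2r, -r², γ)` and
`w = du - r·ud + γ/(r-1)`.  Then `w` is a normal element of `A` (`Aw = wA`), and the
quotient `Ā = A/AwA = A/Aw` is generated by the images `d̄`, `ū` of `d`, `u` subject to
the single relation `d̄ū - r·ūd̄ + γ/(r-1) = 0`; consequently `Ā` is isomorphic to the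
quantized Weyl algebra `C(r)` when `γ ≠ 0` and to the quantum plane `B(r)` when
`γ = 0`. -/
theorem downUp_quotient_by_normal_element (K : Type) [Field K] (n : ℕ) (hn : 1 < n)
    (r : K) (hr : IsPrimitiveRoot r n) (γ : K) :
    (Set.range (fun x : DownUpAlgebra K (2 * r) (-(r ^ 2)) γ =>
        x * (DownUpAlgebra.d K (2 * r) (-(r ^ 2)) γ * DownUpAlgebra.u K (2 * r) (-(r ^ 2)) γ -
          r • (DownUpAlgebra.u K (2 * r) (-(r ^ 2)) γ * DownUpAlgebra.d K (2 * r) (-(r ^ 2)) γ) +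
          algebraMap K (DownUpAlgebra K (2 * r) (-(r ^ 2)) γ) (γ / (r - 1)))) =
      Set.range (fun x : DownUpAlgebra K (2 * r) (-(r ^ 2)) γ =>
        (DownUpAlgebra.d K (2 * r) (-(r ^ 2)) γ * DownUpAlgebra.u K (2 * r) (-(r ^ 2)) γ -
          r • (DownUpAlgebra.u K (2 * r) (-(r ^ 2)) γ * DownUpAlgebra.d K (2 * r) (-(r ^ 2)) γ) +
          algebraMap K (DownUpAlgebra K (2 * r) (-(r ^ 2)) γ) (γ / (r - 1))) * x)) ∧
    (RingQuot.mkAlgHom K (SingleRel (DownUpAlgebra K (2 * r) (-(r ^ 2)) γ)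
          (DownUpAlgebra.d K (2 * r) (-(r ^ 2)) γ * DownUpAlgebra.u K (2 * r) (-(r ^ 2)) γ -
            r • (DownUpAlgebra.u K (2 * r) (-(r ^ 2)) γ * DownUpAlgebra.d K (2 * r) (-(r ^ 2)) γ) +
            algebraMap K (DownUpAlgebra K (2 * r) (-(r ^ 2)) γ) (γ / (r - 1))))
        (DownUpAlgebra.d K (2 * r) (-(r ^ 2)) γ) *
      RingQuot.mkAlgHom K _ (DownUpAlgebra.u K (2 * r) (-(r ^ 2)) γ) -
      r • (RingQuot.mkAlgHom K _ (DownUpAlgebra.u K (2 * r) (-(r ^ 2)) γ) *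
        RingQuot.mkAlgHom K _ (DownUpAlgebra.d K (2 * r) (-(r ^ 2)) γ)) +
      algebraMap K _ (γ / (r - 1)) = 0) ∧
    (Algebra.adjoin K
      ({RingQuot.mkAlgHom K (SingleRel (DownUpAlgebra K (2 * r) (-(r ^ 2)) γ)
          (DownUpAlgebra.d K (2 * r) (-(r ^ 2)) γ * DownUpAlgebra.u K (2 * r) (-(r ^ 2)) γ -
            r • (DownUpAlgebra.u K (2 * r) (-(r ^ 2)) γ * DownUpAlgebra.d K (2 * r) (-(r ^ 2)) γ) +
            algebraMap K (DownUpAlgebra K (2 * r) (-(r ^ 2)) γ) (γ / (r - 1))))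
          (DownUpAlgebra.d K (2 * r) (-(r ^ 2)) γ),
        RingQuot.mkAlgHom K _ (DownUpAlgebra.u K (2 * r) (-(r ^ 2)) γ)} :
        Set (RingQuot (SingleRel (DownUpAlgebra K (2 * r) (-(r ^ 2)) γ)
          (DownUpAlgebra.d K (2 * r) (-(r ^ 2)) γ * DownUpAlgebra.u K (2 * r) (-(r ^ 2)) γ -
            r • (DownUpAlgebra.u K (2 * r) (-(r ^ 2)) γ * DownUpAlgebra.d K (2 * r) (-(r ^ 2)) γ) +
            algebraMap K (DownUpAlgebra K (2 * r) (-(r ^ 2)) γ) (γ / (r - 1)))))) = ⊤) ∧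
    (γ ≠ 0 → Nonempty
      ((RingQuot (SingleRel (DownUpAlgebra K (2 * r) (-(r ^ 2)) γ)
          (DownUpAlgebra.d K (2 * r) (-(r ^ 2)) γ * DownUpAlgebra.u K (2 * r) (-(r ^ 2)) γ -
            r • (DownUpAlgebra.u K (2 * r) (-(r ^ 2)) γ * DownUpAlgebra.d K (2 * r) (-(r ^ 2)) γ) +
            algebraMap K (DownUpAlgebra K (2 * r) (-(r ^ 2)) γ) (γ / (r - 1))))) ≃ₐ[K]
        QuantizedWeyl K r)) ∧
    (γ = 0 → Nonempty
      ((RingQuot (SingleRel (DownUpAlgebra K (2 * r) (-(r ^ 2)) γ)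
          (DownUpAlgebra.d K (2 * r) (-(r ^ 2)) γ * DownUpAlgebra.u K (2 * r) (-(r ^ 2)) γ -
            r • (DownUpAlgebra.u K (2 * r) (-(r ^ 2)) γ * DownUpAlgebra.d K (2 * r) (-(r ^ 2)) γ) +
            algebraMap K (DownUpAlgebra K (2 * r) (-(r ^ 2)) γ) (γ / (r - 1))))) ≃ₐ[K]
        QuantumPlane K r)) := by
  have hr1 : r ≠ 1 := hr.ne_one hn
  have hr0 : r ≠ 0 := hr.ne_zero (by omega)
  exact ⟨DownUpAlgebra.range_mul_w_eq_range_w_mul hr1 hr0,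
    DownUpAlgebra.shiftedQCommutator_mk_d_mk_u, DownUpAlgebra.adjoin_mk_d_mk_u,
    fun hγ => ⟨DownUpAlgebra.quotientEquivQuantizedWeyl hr1 hγ⟩,
    fun hγ => ⟨DownUpAlgebra.quotientEquivQuantumPlane hr1 hγ⟩⟩

end
end

section
/- Let K be a field and η ∈ K with η ≠ 0, and let A_η be the K-algebra with generators h, e, f and defining relations he − eh = e, hf − fh = −f, and ef − η·fe = h. Then A_η is isomorphic as a K-algebra to the down-up algebra A(1 + η, −η, 1). -/
noncomputable section

open FreeAlgebra

/-- Defining relations of the algebra `A_η`: the generators `ι K 0`, `ι K 1`, `ι K 2`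
play the roles of `h`, `e`, `f`, and the relations are `he - eh = e`, `hf - fh = -f`
and `ef - η·fe = h`. -/
inductive AetaRel (K : Type) [Field K] (η : K) :
    FreeAlgebra K (Fin 3) → FreeAlgebra K (Fin 3) → Prop
  | rel1 : AetaRel K η
      (ι K (0 : Fin 3) * ι K (1 : Fin 3) - ι K (1 : Fin 3) * ι K (0 : Fin 3))
      (ι K (1 : Fin 3))
  | rel2 : AetaRel K η
      (ι K (0 : Fin 3) * ι K (2 : Fin 3) - ι K (2 : Fin 3) * ι K (0 : Fin 3))
      (-(ι K (2 : Fin 3)))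
  | rel3 : AetaRel K η
      (ι K (1 : Fin 3) * ι K (2 : Fin 3) - η • (ι K (2 : Fin 3) * ι K (1 : Fin 3)))
      (ι K (0 : Fin 3))

/-- The algebra `A_η` with generators `h, e, f` and relations `he - eh = e`,
`hf - fh = -f`, `ef - η·fe = h`. -/
abbrev Aeta (K : Type) [Field K] (η : K) : Type := RingQuot (AetaRel K η)


section AetaDownUpAux

variable {K : Type} [Field K] {B : Type} [Ring B] [Algebra K B] (η : K)

lemma aeta_fwd1 (d u : B)
    (h1 : d * d * u = (1 + η) • (d * u * d) + (-η) • (u * d * d) + (1 : K) • d) :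
    (η • (u * d) - d * u) * (-d) - (-d) * (η • (u * d) - d * u) = -d := by
  simp only [mul_assoc] at h1 ⊢
  simp only [mul_sub, sub_mul, smul_mul_assoc, mul_smul_comm, neg_mul, mul_neg, neg_sub,
    mul_assoc]
  rw [h1]
  module

lemma aeta_fwd2 (d u : B)
    (h2 : d * u * u = (1 + η) • (u * d * u) + (-η) • (u * u * d) + (1 : K) • u) :
    (η • (u * d) - d * u) * u - u * (η • (u * d) - d * u) = -u := by
  simp only [mul_assoc] at h2 ⊢
  simp only [mul_sub, sub_mul, smul_mul_assoc, mul_smul_comm, mul_assoc]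
  rw [h2]
  module

lemma aeta_fwd3 (d u : B) :
    (-d) * u - η • (u * (-d)) = η • (u * d) - d * u := by
  simp only [neg_mul, mul_neg, smul_neg, neg_neg]
  abel

lemma aeta_bwd1 (h e f : B)
    (r1 : h * e - e * h = e) (r3 : e * f - η • (f * e) = h) :
    (-e) * (-e) * f = (1 + η) • ((-e) * f * (-e)) + (-η) • (f * (-e) * (-e)) + (1 : K) • (-e) := by
  rw [← r3] at r1
  simp only [mul_sub, sub_mul, smul_mul_assoc, mul_smul_comm, mul_assoc] at r1
  simp only [neg_mul, mul_neg, neg_neg, smul_neg, one_smul, mul_assoc]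
  linear_combination (norm := module) -r1

lemma aeta_bwd2 (h e f : B)
    (r2 : h * f - f * h = -f) (r3 : e * f - η • (f * e) = h) :
    (-e) * f * f = (1 + η) • (f * (-e) * f) + (-η) • (f * f * (-e)) + (1 : K) • f := by
  rw [← r3] at r2
  simp only [mul_sub, sub_mul, smul_mul_assoc, mul_smul_comm, mul_assoc] at r2
  simp only [neg_mul, mul_neg, neg_neg, smul_neg, one_smul, mul_assoc]
  linear_combination (norm := module) -r2

lemma aeta_key3 (e f hh : B) (r3 : e * f - η • (f * e) = hh) :
    η • (f * -e) - -e * f = hh := by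
  rw [← r3, mul_neg, neg_mul, smul_neg, sub_neg_eq_add]
  abel

end AetaDownUpAux

/-- For `η ≠ 0`, the algebra `A_η` is isomorphic as a `K`-algebra to the down-up
algebra `A(1 + η, -η, 1)`. -/
theorem aeta_iso_downUp (K : Type) [Field K] (η : K) (hη : η ≠ 0) :
    Nonempty (Aeta K η ≃ₐ[K] DownUpAlgebra K (1 + η) (-η) 1) := by
  classical
  set d : DownUpAlgebra K (1 + η) (-η) 1 := DownUpAlgebra.d K (1 + η) (-η) 1 with hd
  set u : DownUpAlgebra K (1 + η) (-η) 1 := DownUpAlgebra.u K (1 + η) (-η) 1 with hu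
  have h1 : d * d * u = (1 + η) • (d * u * d) + (-η) • (u * d * d) + (1 : K) • d := by
    have := RingQuot.mkAlgHom_rel K (DownUpRel.rel1 (K := K) (α := 1 + η) (β := -η) (γ := 1))
    simpa only [map_mul, map_add, map_smul, hd, hu, DownUpAlgebra.d, DownUpAlgebra.u] using this
  have h2 : d * u * u = (1 + η) • (u * d * u) + (-η) • (u * u * d) + (1 : K) • u := by
    have := RingQuot.mkAlgHom_rel K (DownUpRel.rel2 (K := K) (α := 1 + η) (β := -η) (γ := 1))
    simpa only [map_mul, map_add, map_smul, hd, hu, DownUpAlgebra.d, DownUpAlgebra.u] using this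
  set hh : Aeta K η := RingQuot.mkAlgHom K (AetaRel K η) (ι K (0 : Fin 3)) with hhh
  set e : Aeta K η := RingQuot.mkAlgHom K (AetaRel K η) (ι K (1 : Fin 3)) with he
  set f : Aeta K η := RingQuot.mkAlgHom K (AetaRel K η) (ι K (2 : Fin 3)) with hf
  have r1 : hh * e - e * hh = e := by
    have := RingQuot.mkAlgHom_rel K (AetaRel.rel1 (K := K) (η := η))
    simpa only [map_mul, map_sub, hhh, he] using this
  have r2 : hh * f - f * hh = -f := by
    have := RingQuot.mkAlgHom_rel K (AetaRel.rel2 (K := K) (η := η))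
    simpa only [map_mul, map_sub, map_neg, hhh, hf] using this
  have r3 : e * f - η • (f * e) = hh := by
    have := RingQuot.mkAlgHom_rel K (AetaRel.rel3 (K := K) (η := η))
    simpa only [map_mul, map_sub, map_smul, hhh, he, hf] using this
  let toD : FreeAlgebra K (Fin 3) →ₐ[K] DownUpAlgebra K (1 + η) (-η) 1 :=
    FreeAlgebra.lift K ![η • (u * d) - d * u, -d, u]
  have toD0 : toD (ι K (0 : Fin 3)) = η • (u * d) - d * u := by
    simp [toD, FreeAlgebra.lift_ι_apply]
  have toD1 : toD (ι K (1 : Fin 3)) = -d := by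
    simp [toD, FreeAlgebra.lift_ι_apply]
  have toD2 : toD (ι K (2 : Fin 3)) = u := by
    simp [toD, FreeAlgebra.lift_ι_apply]
  have wD : ∀ ⦃x y⦄, AetaRel K η x y → toD x = toD y := by
    intro x y r
    cases r with
    | rel1 =>
        simp only [map_mul, map_sub, toD0, toD1]
        exact aeta_fwd1 η d u h1
    | rel2 =>
        simp only [map_mul, map_sub, map_neg, toD0, toD1, toD2]
        exact aeta_fwd2 η d u h2
    | rel3 =>
        simp only [map_mul, map_sub, map_smul, toD0, toD1, toD2]
        exact aeta_fwd3 η d u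
  let toA : FreeAlgebra K (Fin 2) →ₐ[K] Aeta K η := FreeAlgebra.lift K ![-e, f]
  have toA0 : toA (ι K (0 : Fin 2)) = -e := by simp [toA, FreeAlgebra.lift_ι_apply]
  have toA1 : toA (ι K (1 : Fin 2)) = f := by simp [toA, FreeAlgebra.lift_ι_apply]
  have wA : ∀ ⦃x y⦄, DownUpRel K (1 + η) (-η) 1 x y → toA x = toA y := by
    intro x y r
    cases r with
    | rel1 =>
        simp only [map_mul, map_add, map_smul, toA0, toA1]
        exact aeta_bwd1 η hh e f r1 r3
    | rel2 =>
        simp only [map_mul, map_add, map_smul, toA0, toA1]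
        exact aeta_bwd2 η hh e f r2 r3
  let φ : Aeta K η →ₐ[K] DownUpAlgebra K (1 + η) (-η) 1 := RingQuot.liftAlgHom K ⟨toD, wD⟩
  let ψ : DownUpAlgebra K (1 + η) (-η) 1 →ₐ[K] Aeta K η := RingQuot.liftAlgHom K ⟨toA, wA⟩
  have hφ : ∀ x, φ (RingQuot.mkAlgHom K (AetaRel K η) x) = toD x := fun x =>
    RingQuot.liftAlgHom_mkAlgHom_apply K toD wD x
  have hψ : ∀ x, ψ (RingQuot.mkAlgHom K (DownUpRel K (1 + η) (-η) 1) x) = toA x := fun x =>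
    RingQuot.liftAlgHom_mkAlgHom_apply K toA wA x
  have key1 : φ (ψ d) = d := by
    rw [hd, DownUpAlgebra.d, hψ, toA0, map_neg, he, hφ, toD1, neg_neg]
    rw [hd, DownUpAlgebra.d]
  have key2 : φ (ψ u) = u := by
    rw [hu, DownUpAlgebra.u, hψ, toA1, hf, hφ, toD2]
    rw [hu, DownUpAlgebra.u]
  have keyd : ψ d = -e := by rw [hd, DownUpAlgebra.d, hψ, toA0]
  have keyu : ψ u = f := by rw [hu, DownUpAlgebra.u, hψ, toA1]
  have key3 : ψ (φ hh) = hh := by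
    rw [hhh, hφ, toD0, map_sub, map_smul, map_mul, map_mul, keyd, keyu, ← hhh]
    exact aeta_key3 η e f hh r3
  have key4 : ψ (φ e) = e := by
    rw [he, hφ, toD1, map_neg, keyd, neg_neg, he]
  have key5 : ψ (φ f) = f := by
    rw [hf, hφ, toD2, keyu, hf]
  refine ⟨AlgEquiv.ofAlgHom φ ψ ?_ ?_⟩
  · refine RingQuot.ringQuot_ext' K _ _ (FreeAlgebra.hom_ext (funext fun i => ?_))
    fin_cases i
    · show φ (ψ d) = d
      exact key1
    · show φ (ψ u) = u
      exact key2
  · refine RingQuot.ringQuot_ext' K _ _ (FreeAlgebra.hom_ext (funext fun i => ?_))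
    fin_cases i
    · show ψ (φ hh) = hh
      exact key3
    · show ψ (φ e) = e
      exact key4
    · show ψ (φ f) = f
      exact key5

end
end
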